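/- Let d₀ > 0 and let Λ : [0,∞) → ℝ be twice differentiable with Λ(t) > 0 for all t ≥ 0 and satisfying the differential inequality Λ''(t)·Λ(t) − (Λ'(t))² ≥ d₀·Λ(t) for all t ≥ 0. Then Λ is unbounded, i.e. sup_{t ≥ 0} Λ(t) = +∞. -/

import Mathlib

/-!
Dividing the inequality by `Λ > 0` gives `Λ'' ≥ d₀ + (Λ')² / Λ ≥ d₀`, so by two mean value
arguments `Λ` lies above the parabola `Λ 0 + Λ' 0 * t + d₀ / 2 * t ^ 2`,
which tends to `∞`.
-/

open Set Filter

lemma mul_sub_le_sub_of_le_deriv_Ici {f : ℝ → ℝ} {a C : ℝ}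
    (hf : ∀ x, a ≤ x → DifferentiableAt ℝ f x) (hC : ∀ x, a < x → C ≤ deriv f x)
    {t : ℝ} (ht : a ≤ t) : C * (t - a) ≤ f t - f a :=
  (convex_Ici a).mul_sub_le_image_sub_of_le_deriv
    (fun x hx => (hf x hx).continuousAt.continuousWithinAt)
    (fun x hx => (hf x (le_of_lt (by rwa [interior_Ici] at hx))).differentiableWithinAt)
    (fun x hx => hC x (by rwa [interior_Ici] at hx)) a self_mem_Ici t ht ht

lemma add_deriv_mul_add_mul_sq_le_of_le_deriv_deriv {f : ℝ → ℝ} {a c : ℝ}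
    (hf : ∀ x, a ≤ x → DifferentiableAt ℝ f x)
    (hf' : ∀ x, a ≤ x → DifferentiableAt ℝ (deriv f) x)
    (hc : ∀ x, a < x → c ≤ deriv (deriv f) x) {t : ℝ} (ht : a ≤ t) :
    f a + deriv f a * (t - a) + c / 2 * (t - a) ^ 2 ≤ f t := by
  set q : ℝ → ℝ := fun x => f a + deriv f a * (x - a) + c / 2 * (x - a) ^ 2
  have hq : ∀ x, HasDerivAt q (deriv f a + c * (x - a)) x := fun x => by
    have := (((hasDerivAt_id x).sub_const a).const_mul (deriv f a)).const_add (f a) |>.add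
      ((((hasDerivAt_id x).sub_const a).pow 2).const_mul (c / 2))
    exact this.congr_deriv (by simp only [id, Nat.cast_ofNat]; ring)
  have hslope : ∀ x, a ≤ x → deriv f a + c * (x - a) ≤ deriv f x := fun x hx => by
    linarith [mul_sub_le_sub_of_le_deriv_Ici hf' hc hx]
  have hgap := mul_sub_le_sub_of_le_deriv_Ici (f := fun x => f x - q x) (C := 0)
    (fun x hx => (hf x hx).sub (hq x).differentiableAt)
    (fun x hx => by
      rw [deriv_fun_sub (hf x hx.le) (hq x).differentiableAt, (hq x).deriv]
      linarith [hslope x hx.le]) ht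
  simp only [q, sub_self, mul_zero, zero_mul, add_zero, zero_pow two_ne_zero] at hgap
  linarith

lemma tendsto_add_mul_add_mul_sq_atTop (α β : ℝ) {γ : ℝ} (hγ : 0 < γ) :
    Tendsto (fun s => α + β * s + γ * s ^ 2) atTop atTop := by
  have h : Tendsto (fun s => s * (β + γ * s)) atTop atTop :=
    tendsto_id.atTop_mul_atTop₀
      (tendsto_atTop_add_const_left _ β (tendsto_id.const_mul_atTop hγ))
  convert tendsto_atTop_add_const_left _ α h using 2
  ring

lemma tendsto_atTop_of_le_deriv_deriv {f : ℝ → ℝ} {a c : ℝ} (hc0 : 0 < c)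
    (hf : ∀ x, a ≤ x → DifferentiableAt ℝ f x)
    (hf' : ∀ x, a ≤ x → DifferentiableAt ℝ (deriv f) x)
    (hc : ∀ x, a < x → c ≤ deriv (deriv f) x) :
    Tendsto f atTop atTop := by
  have hshift : Tendsto (fun t : ℝ => t - a) atTop atTop :=
    tendsto_atTop_add_const_right _ _ tendsto_id
  refine tendsto_atTop_mono' atTop ?_
    ((tendsto_add_mul_add_mul_sq_atTop (f a) (deriv f a) (half_pos hc0)).comp hshift)
  filter_upwards [eventually_ge_atTop a] with t ht
  exact add_deriv_mul_add_mul_sq_le_of_le_deriv_deriv hf hf' hc ht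

theorem ode_inequality_unbounded
    (d₀ : ℝ) (hd₀ : 0 < d₀) (Λ : ℝ → ℝ)
    (hpos : ∀ t : ℝ, 0 ≤ t → 0 < Λ t)
    (hdiff1 : ∀ t : ℝ, 0 ≤ t → DifferentiableAt ℝ Λ t)
    (hdiff2 : ∀ t : ℝ, 0 ≤ t → DifferentiableAt ℝ (deriv Λ) t)
    (hineq : ∀ t : ℝ, 0 ≤ t →
      d₀ * Λ t ≤ deriv (deriv Λ) t * Λ t - (deriv Λ t)^2) :
    ∀ C : ℝ, ∃ t : ℝ, 0 ≤ t ∧ C < Λ t := by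
  have hconvex : ∀ t, 0 < t → d₀ ≤ deriv (deriv Λ) t := fun t ht =>
    le_of_mul_le_mul_right ((hineq t ht.le).trans (sub_le_self _ (sq_nonneg _))) (hpos t ht.le)
  intro C
  obtain ⟨t, hCt, ht⟩ :=
    (((tendsto_atTop_of_le_deriv_deriv hd₀ hdiff1 hdiff2 hconvex).eventually_gt_atTop C).and
      (eventually_ge_atTop 0)).exists
  exact ⟨t, ht, hCt⟩
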